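/- In the noisy single source setting R = N + xxᵀ, there exists a strictly monotonically increasing function h : ℝ → ℝ (depending only on ⟨N⁻¹x,x⟩ and k) such that P_SAM(L) = h(P_NAI(L)) for all full-rank L ∈ ℝ^{n×k}; consequently, NAI and SAM beamformers attain their maxima at the same leadfield matrices. -/

import Mathlib

set_option linter.unusedSectionVars false
open Matrix

namespace Stmt15Aux
variable {m p q : Type*} [Fintype m] [Fintype p] [Fintype q]

lemma mul_vmv (M : Matrix m p ℝ) (a : p → ℝ) (b : q → ℝ) :
    M * vecMulVec a b = vecMulVec (M *ᵥ a) b := by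
  ext i j
  simp [Matrix.mul_apply, vecMulVec_apply, mulVec, dotProduct, Finset.sum_mul, mul_assoc]

lemma vmv_mul (a : m → ℝ) (b : p → ℝ) (M : Matrix p q ℝ) :
    vecMulVec a b * M = vecMulVec a (Mᵀ *ᵥ b) := by
  ext i j
  simp only [Matrix.mul_apply, vecMulVec_apply, mulVec, dotProduct, transpose_apply,
    Finset.mul_sum]
  exact Finset.sum_congr rfl fun l _ => by ring

lemma vmv_mulVec (a : m → ℝ) (b : p → ℝ) (v : p → ℝ) :
    vecMulVec a b *ᵥ v = (b ⬝ᵥ v) • a := by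
  ext i
  simp only [mulVec, vecMulVec_apply, dotProduct, Pi.smul_apply, smul_eq_mul, Finset.sum_mul]
  exact Finset.sum_congr rfl fun l _ => by ring

lemma trace_vmv (a b : m → ℝ) : (vecMulVec a b).trace = a ⬝ᵥ b := by
  simp [Matrix.trace, Matrix.diag, vecMulVec_apply, dotProduct]

lemma vmv_mul_vmv (a : m → ℝ) (b c : p → ℝ) (d : q → ℝ) :
    vecMulVec a b * vecMulVec c d = (b ⬝ᵥ c) • vecMulVec a d := by
  ext i j
  simp only [Matrix.mul_apply, vecMulVec_apply, Matrix.smul_apply, smul_eq_mul, dotProduct,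
    Finset.sum_mul]
  exact Finset.sum_congr rfl fun l _ => by ring

lemma transpose_sandwich (B : Matrix m p ℝ) (M : Matrix p p ℝ) :
    (B * M * Bᵀ)ᵀ = B * Mᵀ * Bᵀ := by
  rw [Matrix.transpose_mul, Matrix.transpose_mul, transpose_transpose, Matrix.mul_assoc]

lemma dot_conj (B : Matrix m p ℝ) (M : Matrix m m ℝ) (v : p → ℝ) :
    v ⬝ᵥ ((Bᵀ * M * B) *ᵥ v) = (B *ᵥ v) ⬝ᵥ (M *ᵥ (B *ᵥ v)) := by
  rw [← mulVec_mulVec, ← mulVec_mulVec, dotProduct_mulVec, vecMul_transpose]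

lemma posDef_conj {M : Matrix m m ℝ} (hM : M.PosDef) (B : Matrix m p ℝ)
    (hB : Function.Injective B.mulVec) : (Bᵀ * M * B).PosDef := by
  refine PosDef.of_dotProduct_mulVec_pos ?_ ?_
  · have h := isHermitian_conjTranspose_mul_mul B hM.1
    rwa [conjTranspose_eq_transpose_of_trivial] at h
  · intro v hv
    have hBv : B *ᵥ v ≠ 0 := fun h => hv (hB (h.trans (B.mulVec_zero).symm))
    have := hM.dotProduct_mulVec_pos hBv
    rw [star_trivial] at this ⊢
    rwa [dot_conj]

lemma rank_inj {n k : ℕ} (L : Matrix (Fin n) (Fin k) ℝ) (hL : L.rank = k) :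
    Function.Injective L.mulVec := by
  have hker : LinearMap.ker L.mulVecLin = ⊥ := by
    have h1 := LinearMap.finrank_range_add_finrank_ker L.mulVecLin
    rw [Module.finrank_fin_fun] at h1
    have h2 : Module.finrank ℝ (LinearMap.range L.mulVecLin) = k := hL
    have h3 : Module.finrank ℝ (LinearMap.ker L.mulVecLin) = 0 := by omega
    exact Submodule.finrank_eq_zero.mp h3
  intro a b hab
  exact (LinearMap.ker_eq_bot.mp hker) (show L.mulVecLin a = L.mulVecLin b from hab)

end Stmt15Aux

open Stmt15Aux

/-- In the noisy single source setting `R = N + xxᵀ`, there is a strictly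
monotonically increasing `h : ℝ → ℝ` with `P_SAM(L) = h(P_NAI(L))` for all
full-rank `L`; consequently NAI and SAM attain their maxima at the same
leadfield matrices. -/
theorem stmt15 {n k : ℕ} (N : Matrix (Fin n) (Fin n) ℝ) (hN : N.PosDef)
    (x : Fin n → ℝ) (hx : x ≠ 0)
    (R : Matrix (Fin n) (Fin n) ℝ) (hR : R = N + vecMulVec x x)
    (PNAI PSAM : Matrix (Fin n) (Fin k) ℝ → ℝ)
    (hPNAI : ∀ L, PNAI L = ((Lᵀ * N⁻¹ * L) * (Lᵀ * R⁻¹ * L)⁻¹).trace)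
    (hPSAM : ∀ L, PSAM L = ((Lᵀ * R⁻¹ * L) * (Lᵀ * R⁻¹ * N * R⁻¹ * L)⁻¹).trace) :
    ∃ h : ℝ → ℝ, StrictMono h ∧
      (∀ L : Matrix (Fin n) (Fin k) ℝ, L.rank = k → PSAM L = h (PNAI L)) ∧
      (∀ L₀ : Matrix (Fin n) (Fin k) ℝ, L₀.rank = k →
        ((∀ L : Matrix (Fin n) (Fin k) ℝ, L.rank = k → PNAI L ≤ PNAI L₀) ↔
          (∀ L : Matrix (Fin n) (Fin k) ℝ, L.rank = k → PSAM L ≤ PSAM L₀))) := by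
  set c := x ⬝ᵥ (N⁻¹ *ᵥ x) with hc_def
  have hNinv : (N⁻¹).PosDef := hN.inv
  have hcpos : 0 < c := by simpa using hNinv.dotProduct_mulVec_pos hx
  have h1c : (0:ℝ) < 1 + c := by linarith
  have hXpsd : (vecMulVec x x).PosSemidef := by
    refine PosSemidef.of_dotProduct_mulVec_nonneg ?_ ?_
    · show (vecMulVec x x)ᴴ = vecMulVec x x
      rw [conjTranspose_eq_transpose_of_trivial]
      ext i j; simp [vecMulVec_apply, mul_comm]
    · intro v
      rw [star_trivial, vmv_mulVec, dotProduct_smul, smul_eq_mul, dotProduct_comm v x]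
      exact mul_self_nonneg _
  have hRpd : R.PosDef := by rw [hR]; exact hN.add_posSemidef hXpsd
  have hNdet : IsUnit N.det := isUnit_iff_ne_zero.mpr hN.det_pos.ne'
  have hRdet : IsUnit R.det := isUnit_iff_ne_zero.mpr hRpd.det_pos.ne'
  have hRinv : (R⁻¹).PosDef := hRpd.inv
  have hRinvT : (R⁻¹)ᵀ = R⁻¹ := by
    have h : R⁻¹ᴴ = R⁻¹ := hRinv.1
    rwa [conjTranspose_eq_transpose_of_trivial] at h
  have hsub : R *ᵥ (N⁻¹ *ᵥ x) = (1 + c) • x := by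
    rw [hR, add_mulVec, mulVec_mulVec, mul_nonsing_inv _ hNdet, one_mulVec, vmv_mulVec,
      ← hc_def, add_smul, one_smul]
  have hRx : R⁻¹ *ᵥ x = (1 + c)⁻¹ • (N⁻¹ *ᵥ x) := by
    have h1 : R⁻¹ *ᵥ (R *ᵥ (N⁻¹ *ᵥ x)) = N⁻¹ *ᵥ x := by
      rw [mulVec_mulVec, nonsing_inv_mul _ hRdet, one_mulVec]
    rw [hsub, mulVec_smul] at h1
    rw [← h1, smul_smul, inv_mul_cancel₀ h1c.ne', one_smul]
  have hcx : x ⬝ᵥ (R⁻¹ *ᵥ x) = (1 + c)⁻¹ * c := by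
    rw [hRx, dotProduct_smul, smul_eq_mul, ← hc_def]
  have hNinvR : N⁻¹ = R⁻¹ + (1 + c) • vecMulVec (R⁻¹ *ᵥ x) (R⁻¹ *ᵥ x) := by
    apply inv_eq_right_inv
    have hNR : N = R - vecMulVec x x := by rw [hR, add_sub_cancel_right]
    rw [hNR]
    have hRw : R *ᵥ (R⁻¹ *ᵥ x) = x := by
      rw [mulVec_mulVec, mul_nonsing_inv _ hRdet, one_mulVec]
    rw [sub_mul, mul_add, mul_add, mul_nonsing_inv _ hRdet]
    rw [Matrix.mul_smul, mul_vmv, hRw]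
    rw [vmv_mul, hRinvT, Matrix.mul_smul, vmv_mul_vmv, hcx, smul_smul]
    have hcoef : (1 + c) * ((1 + c)⁻¹ * c) = c := by
      field_simp
    rw [hcoef, add_smul, one_smul]
    abel
  set w : Fin n → ℝ := R⁻¹ *ᵥ x with hw_def
  have main : ∀ L : Matrix (Fin n) (Fin k) ℝ, L.rank = k →
      ∃ t : ℝ, 0 ≤ t ∧ t < 1 ∧ (1 + c) * t ≤ c ∧
        PNAI L = k + (1 + c) * t ∧ PSAM L = k + t / (1 - t) := by
    intro L hL
    have hLi : Function.Injective L.mulVec := rank_inj L hL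
    set A : Matrix (Fin k) (Fin k) ℝ := Lᵀ * R⁻¹ * L with hA_def
    have hA : A.PosDef := posDef_conj hRinv L hLi
    have hAdet : IsUnit A.det := isUnit_iff_ne_zero.mpr hA.det_pos.ne'
    have hAinv : (A⁻¹).PosDef := hA.inv
    have hAinvT : (A⁻¹)ᵀ = A⁻¹ := by
      have h : (A⁻¹)ᴴ = A⁻¹ := hAinv.1
      rwa [conjTranspose_eq_transpose_of_trivial] at h
    set u : Fin k → ℝ := Lᵀ *ᵥ w with hu_def
    set t : ℝ := u ⬝ᵥ (A⁻¹ *ᵥ u) with ht_def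
    have ht0 : 0 ≤ t := by simpa using hAinv.posSemidef.dotProduct_mulVec_nonneg u
    -- key algebraic identities
    have key1 : Lᵀ * N⁻¹ * L = A + (1 + c) • vecMulVec u u := by
      rw [hNinvR, Matrix.mul_add, Matrix.add_mul, Matrix.mul_smul, Matrix.smul_mul, ← hA_def]
      congr 1
      rw [mul_vmv, vmv_mul]
    have key2 : Lᵀ * R⁻¹ * N * R⁻¹ * L = A - vecMulVec u u := by
      have hNR : N = R - vecMulVec x x := by rw [hR, add_sub_cancel_right]
      rw [hNR, Matrix.mul_sub, Matrix.sub_mul, Matrix.sub_mul]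
      have e1 : Lᵀ * R⁻¹ * R = Lᵀ := by
        rw [Matrix.mul_assoc, nonsing_inv_mul _ hRdet, Matrix.mul_one]
      rw [e1, ← hA_def]
      congr 1
      rw [mul_vmv, vmv_mul, vmv_mul, hRinvT, ← hw_def, ← hu_def]
      congr 1
      rw [← Matrix.mulVec_mulVec, ← hw_def]
    have hBpd : (A - vecMulVec u u).PosDef := by
      rw [← key2]
      have e3 : Lᵀ * R⁻¹ * N * R⁻¹ * L = (R⁻¹ * L)ᵀ * N * (R⁻¹ * L) := by
        rw [Matrix.transpose_mul, hRinvT, Matrix.mul_assoc (Lᵀ * R⁻¹ * N) R⁻¹ L]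
      rw [e3]
      refine posDef_conj hN _ ?_
      intro a b hab
      apply hLi
      have h4 : R⁻¹ *ᵥ (L *ᵥ a) = R⁻¹ *ᵥ (L *ᵥ b) := by
        simpa [← mulVec_mulVec] using hab
      have h5 := congrArg (fun v => R *ᵥ v) h4
      simpa [mulVec_mulVec, ← Matrix.mul_assoc, mul_nonsing_inv _ hRdet] using h5
    have hcomm : (A⁻¹ *ᵥ u) ⬝ᵥ u = t := by rw [dotProduct_comm, ← ht_def]
    have ht1 : t < 1 := by
      by_cases hu : u = 0
      · rw [ht_def, hu]; simp
      · have hv : A⁻¹ *ᵥ u ≠ 0 := by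
          intro h
          apply hu
          have hAv : A *ᵥ (A⁻¹ *ᵥ u) = u := by
            rw [mulVec_mulVec, mul_nonsing_inv _ hAdet, one_mulVec]
          rw [h, mulVec_zero] at hAv
          exact hAv.symm
        have hAv : A *ᵥ (A⁻¹ *ᵥ u) = u := by
          rw [mulVec_mulVec, mul_nonsing_inv _ hAdet, one_mulVec]
        have hpos := hBpd.dotProduct_mulVec_pos hv
        rw [star_trivial, sub_mulVec, dotProduct_sub, hAv, vmv_mulVec, dotProduct_smul,
          smul_eq_mul, hcomm, ← ht_def] at hpos
        nlinarith
    have htc : (1 + c) * t ≤ c := by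
      classical
      open scoped MatrixOrder in
      set W : Matrix (Fin n) (Fin n) ℝ := CFC.sqrt R⁻¹ with hW_def
      open scoped MatrixOrder in
      have hWW : W * W = R⁻¹ := CFC.sqrt_mul_sqrt_self _ hRinv.posSemidef.nonneg
      have hWT : Wᵀ = W := by
        open scoped MatrixOrder in
        have h : Wᴴ = W := (Matrix.nonneg_iff_posSemidef.mp (CFC.sqrt_nonneg R⁻¹)).1
        rwa [conjTranspose_eq_transpose_of_trivial] at h
      set S : Matrix (Fin n) (Fin k) ℝ := W * L with hS_def
      have hSS : Sᵀ * S = A := by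
        rw [hS_def, Matrix.transpose_mul, hWT, hA_def, ← hWW,
          ← Matrix.mul_assoc, Matrix.mul_assoc Lᵀ W W]
      set Q : Matrix (Fin n) (Fin n) ℝ := S * A⁻¹ * Sᵀ with hQ_def
      have hQT : Qᵀ = Q := by
        rw [hQ_def, transpose_sandwich, hAinvT]
      have hAA : A⁻¹ * A = 1 := nonsing_inv_mul _ hAdet
      have hQQ : Q * Q = Q := by
        have e : S * A⁻¹ * Sᵀ * (S * A⁻¹ * Sᵀ) = S * ((A⁻¹ * (Sᵀ * S)) * (A⁻¹ * Sᵀ)) := by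
          simp only [Matrix.mul_assoc]
        rw [hQ_def, e, hSS, hAA, Matrix.one_mul, ← Matrix.mul_assoc]
      have hproj : (1 - Q).PosSemidef := by
        have heq : 1 - Q = (1 - Q)ᵀ * (1 - Q) := by
          rw [transpose_sub, transpose_one, hQT, Matrix.sub_mul, Matrix.mul_sub,
            Matrix.mul_sub, hQQ]
          simp only [Matrix.one_mul, Matrix.mul_one]
          abel
        rw [heq, ← conjTranspose_eq_transpose_of_trivial]
        exact posSemidef_conjTranspose_mul_self _
      have hz := hproj.dotProduct_mulVec_nonneg (W *ᵥ x)
      rw [star_trivial, sub_mulVec, dotProduct_sub, one_mulVec] at hz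
      have eW : Wᵀ * 1 * W = R⁻¹ := by rw [hWT, Matrix.mul_one, hWW]
      have e4 : (W *ᵥ x) ⬝ᵥ (W *ᵥ x) = (1 + c)⁻¹ * c := by
        have h6 := dot_conj W (1 : Matrix (Fin n) (Fin n) ℝ) x
        rw [eW, one_mulVec, hcx] at h6
        exact h6.symm
      have eB : Wᵀ * Q * W = (Lᵀ * R⁻¹)ᵀ * A⁻¹ * (Lᵀ * R⁻¹) := by
        rw [hQ_def, hS_def, Matrix.transpose_mul, hWT, Matrix.transpose_mul, hRinvT,
          transpose_transpose, ← hWW]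
        simp only [Matrix.mul_assoc]
      have hBx : (Lᵀ * R⁻¹) *ᵥ x = u := by
        rw [← Matrix.mulVec_mulVec, ← hw_def]
      have e5 : (W *ᵥ x) ⬝ᵥ (Q *ᵥ (W *ᵥ x)) = t := by
        have h7 := dot_conj W Q x
        rw [eB, dot_conj, hBx, ← ht_def] at h7
        exact h7.symm
      rw [e4, e5] at hz
      have h8 : t ≤ (1 + c)⁻¹ * c := by linarith
      have h9 : (1 + c) * ((1 + c)⁻¹ * c) = c := by field_simp
      nlinarith
    refine ⟨t, ht0, ht1, htc, ?_, ?_⟩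
    · rw [hPNAI L, key1, Matrix.add_mul, Matrix.smul_mul, mul_nonsing_inv _ hAdet,
        vmv_mul, hAinvT, trace_add, trace_smul, trace_one, trace_vmv, ← ht_def]
      simp [smul_eq_mul]
    · have h1t : (1:ℝ) - t ≠ 0 := by linarith
      have eA : A * (A⁻¹ * vecMulVec u u * A⁻¹) = vecMulVec u u * A⁻¹ := by
        simp only [← Matrix.mul_assoc]
        rw [mul_nonsing_inv _ hAdet, Matrix.one_mul]
      have hUAU : vecMulVec u u * A⁻¹ * vecMulVec u u = t • vecMulVec u u := by
        rw [vmv_mul, hAinvT, vmv_mul_vmv, hcomm]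
      have eU : vecMulVec u u * (A⁻¹ * vecMulVec u u * A⁻¹) =
          t • (vecMulVec u u * A⁻¹) := by
        simp only [← Matrix.mul_assoc]
        rw [hUAU, Matrix.smul_mul]
      have hinv : (A - vecMulVec u u)⁻¹ =
          A⁻¹ + (1 - t)⁻¹ • (A⁻¹ * vecMulVec u u * A⁻¹) := by
        apply inv_eq_right_inv
        rw [Matrix.sub_mul, Matrix.mul_add, Matrix.mul_add, mul_nonsing_inv _ hAdet,
          Matrix.mul_smul, eA, Matrix.mul_smul, eU, smul_smul]
        match_scalars
        · ring
        · field_simp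
          ring
      rw [hPSAM L, key2, hinv, Matrix.mul_add, mul_nonsing_inv _ hAdet, Matrix.mul_smul, eA,
        trace_add, trace_smul, vmv_mul, hAinvT, trace_vmv, ← ht_def, trace_one]
      simp only [smul_eq_mul, div_eq_mul_inv, Fintype.card_fin]
      ring
  set h : ℝ → ℝ := fun s => if s ≤ k + c then k + (s - k) / (1 + c - (s - k)) else s
    with hh_def
  have hval : ∀ s : ℝ, s ≤ k + c → h s = k + (s - k) / (1 + c - (s - k)) := fun s hs => by
    rw [hh_def]; simp only [if_pos hs]
  have hub : ∀ s : ℝ, s ≤ k + c → h s ≤ k + c := by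
    intro s hs
    rw [hval s hs]
    have hd : (0:ℝ) < 1 + c - (s - k) := by linarith
    have hq : (s - k) / (1 + c - (s - k)) ≤ c := by
      rw [div_le_iff₀ hd]
      nlinarith [mul_nonneg h1c.le (by linarith : (0:ℝ) ≤ c - (s - k))]
    linarith
  have hmono : StrictMono h := by
    intro s₁ s₂ hlt
    by_cases h1 : s₁ ≤ k + c <;> by_cases h2 : s₂ ≤ k + c
    · rw [hval s₁ h1, hval s₂ h2]
      have hd1 : (0:ℝ) < 1 + c - (s₁ - k) := by linarith
      have hd2 : (0:ℝ) < 1 + c - (s₂ - k) := by linarith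
      have : (s₁ - k) / (1 + c - (s₁ - k)) < (s₂ - k) / (1 + c - (s₂ - k)) := by
        rw [div_lt_div_iff₀ hd1 hd2]
        nlinarith
      linarith
    · have : h s₂ = s₂ := by rw [hh_def]; simp only [if_neg h2]
      rw [this]
      have h3 := hub s₁ h1
      push_neg at h2
      linarith
    · exfalso; push_neg at h1; linarith
    · have e1 : h s₁ = s₁ := by rw [hh_def]; simp only [if_neg h1]
      have e2 : h s₂ = s₂ := by rw [hh_def]; simp only [if_neg h2]
      rw [e1, e2]; exact hlt
  have heq : ∀ L : Matrix (Fin n) (Fin k) ℝ, L.rank = k → PSAM L = h (PNAI L) := by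
    intro L hL
    obtain ⟨t, ht0, ht1, htc, hnai, hsam⟩ := main L hL
    have hs : PNAI L ≤ k + c := by rw [hnai]; linarith
    rw [hsam, hval _ hs, hnai]
    have h1t : (0:ℝ) < 1 - t := by linarith
    rw [show (k:ℝ) + (1 + c) * t - k = (1 + c) * t from by ring,
      show (1:ℝ) + c - (1 + c) * t = (1 + c) * (1 - t) from by ring,
      mul_div_mul_left _ _ h1c.ne']
  refine ⟨h, hmono, heq, fun L₀ hL₀ => ⟨fun H L hL => ?_, fun H L hL => ?_⟩⟩
  · rw [heq L hL, heq L₀ hL₀]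
    exact hmono.monotone (H L hL)
  · have := H L hL
    rw [heq L hL, heq L₀ hL₀] at this
    exact hmono.le_iff_le.mp this
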